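/- For k ∈ {2,3}, the maximum over all pairs (B, x) with B ⊆ Z_k and x ∈ Z_k, (B, x) ≠ (∅, 0), of the minimum length of a valid path from 0 to x covering B in the marked cycle on Z_k, equals k. -/

import Mathlib

/-!
Every move covers a single node, so a path covering all of `ZMod k` has at least `k` moves; in
particular the pair `(univ, 0)` needs `k` moves. Conversely, `k - 1` moves `c` (resp. `a`) followed
by one suitable last move cover every node and end at `0` or `-1` (resp. `1`). For `k ≤ 3` these
are all the nodes, so every pair is served by a path of length `k`.
-/

/-- The four move types in the marked cycle. -/
inductive Move : Type
  | a | b | c | d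
deriving DecidableEq

/-- Where a move from node `x` in `ZMod k` leads. -/
def Move.step {k : ℕ} (x : ZMod k) : Move → ZMod k
  | .a => x - 1
  | .b => x
  | .c => x + 1
  | .d => x

/-- The node covered by a move performed from node `x`. -/
def Move.covers {k : ℕ} (x : ZMod k) : Move → ZMod k
  | .a => x - 1
  | .b => x
  | .c => x
  | .d => x - 1

/-- The node reached after performing a sequence of moves starting at `s`. -/
def endAt {k : ℕ} (s : ZMod k) : List Move → ZMod k
  | [] => s
  | m :: ms => endAt (Move.step s m) ms

/-- The set of nodes covered by a sequence of moves starting at `s`. -/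
def coveredSet {k : ℕ} (s : ZMod k) : List Move → Set (ZMod k)
  | [] => ∅
  | m :: ms => insert (Move.covers s m) (coveredSet (Move.step s m) ms)

/-- A valid path in the marked cycle on `ZMod k` with marked set `B`, start `s`,
end `t`: a nonempty sequence of moves from `s` to `t` covering every node of `B`. -/
def ValidPath {k : ℕ} (B : Set (ZMod k)) (s t : ZMod k) (p : List Move) : Prop :=
  p ≠ [] ∧ endAt s p = t ∧ B ⊆ coveredSet s p

/-- A shortest valid path: valid and of minimum length among all valid paths. -/
def ShortestPath {k : ℕ} (B : Set (ZMod k)) (s t : ZMod k) (p : List Move) : Prop :=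
  ValidPath B s t p ∧ ∀ q : List Move, ValidPath B s t q → p.length ≤ q.length

section

variable {k : ℕ}

theorem endAt_append (s : ZMod k) (p q : List Move) :
    endAt s (p ++ q) = endAt (endAt s p) q := by
  induction p generalizing s with
  | nil => rfl
  | cons m ms ih => exact ih _

theorem coveredSet_append (s : ZMod k) (p q : List Move) :
    coveredSet s (p ++ q) = coveredSet s p ∪ coveredSet (endAt s p) q := by
  induction p generalizing s with
  | nil => simp [coveredSet, endAt]
  | cons m ms ih => simp [coveredSet, endAt, ih, Set.insert_union]

theorem ncard_coveredSet_le (s : ZMod k) (p : List Move) :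
    (coveredSet s p).ncard ≤ p.length := by
  induction p generalizing s with
  | nil => simp [coveredSet]
  | cons m ms ih =>
    exact (Set.ncard_insert_le _ _).trans (Nat.succ_le_succ (ih _))

theorem le_length_of_univ_subset_coveredSet [NeZero k] {s : ZMod k} {p : List Move}
    (h : Set.univ ⊆ coveredSet s p) : k ≤ p.length :=
  calc k = (Set.univ : Set (ZMod k)).ncard := by simp
    _ ≤ (coveredSet s p).ncard := Set.ncard_le_ncard h
    _ ≤ p.length := ncard_coveredSet_le s p

theorem endAt_replicate_c (s : ZMod k) (n : ℕ) : endAt s (List.replicate n .c) = s + n := by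
  induction n generalizing s with
  | zero => simp [endAt]
  | succ n ih =>
    rw [List.replicate_succ, endAt, ih, Move.step]
    push_cast
    ring

theorem endAt_replicate_a (s : ZMod k) (n : ℕ) : endAt s (List.replicate n .a) = s - n := by
  induction n generalizing s with
  | zero => simp [endAt]
  | succ n ih =>
    rw [List.replicate_succ, endAt, ih, Move.step]
    push_cast
    ring

theorem add_mem_coveredSet_replicate_c (s : ZMod k) {n i : ℕ} (hi : i < n) :
    s + i ∈ coveredSet s (List.replicate n .c) := by
  induction n generalizing s i with
  | zero => omega
  | succ n ih =>
    rw [List.replicate_succ, coveredSet]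
    rcases i with _ | i
    · simp [Move.covers]
    · refine Set.mem_insert_of_mem _ ?_
      have := ih (s + 1) (by omega : i < n)
      simp only [Move.step] at this ⊢
      convert this using 1
      push_cast
      ring

theorem sub_mem_coveredSet_replicate_a (s : ZMod k) {n i : ℕ} (hi : i < n) :
    s - (i + 1 : ℕ) ∈ coveredSet s (List.replicate n .a) := by
  induction n generalizing s i with
  | zero => omega
  | succ n ih =>
    rw [List.replicate_succ, coveredSet]
    rcases i with _ | i
    · simp [Move.covers]
    · refine Set.mem_insert_of_mem _ ?_
      have := ih (s - 1) (by omega : i < n)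
      simp only [Move.step] at this ⊢
      convert this using 1
      push_cast
      ring

theorem natCast_pred_self [NeZero k] : ((k - 1 : ℕ) : ZMod k) = -1 := by
  rw [Nat.cast_pred (NeZero.pos k), ZMod.natCast_self, zero_sub]

theorem univ_subset_coveredSet_sweep_c [NeZero k] {m : Move} (hm : m = .b ∨ m = .c) :
    Set.univ ⊆ coveredSet (0 : ZMod k) (List.replicate (k - 1) .c ++ [m]) := by
  intro y _
  rw [coveredSet_append, ← ZMod.natCast_zmod_val y]
  by_cases hy : y.val < k - 1
  · left
    simpa using add_mem_coveredSet_replicate_c (0 : ZMod k) hy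
  · right
    have hy' : y.val = k - 1 := by have := ZMod.val_lt y; omega
    rcases hm with rfl | rfl <;> simp [coveredSet, Move.covers, endAt_replicate_c, hy']

theorem univ_subset_coveredSet_sweep_a [NeZero k] {m : Move} (hm : m = .a ∨ m = .d) :
    Set.univ ⊆ coveredSet (0 : ZMod k) (List.replicate (k - 1) .a ++ [m]) := by
  intro y _
  rw [coveredSet_append]
  by_cases hy : y = 0
  · right
    rcases hm with rfl | rfl <;>
      simp [coveredSet, Move.covers, endAt_replicate_a, natCast_pred_self, hy]
  · left
    have hpos : 0 < y.val := by rwa [Nat.pos_iff_ne_zero, ZMod.val_ne_zero]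
    have hlt := ZMod.val_lt y
    convert sub_mem_coveredSet_replicate_a (0 : ZMod k) (by omega : k - 1 - y.val < k - 1)
    rw [(by omega : k - 1 - y.val + 1 = k - y.val), Nat.cast_sub hlt.le, ZMod.natCast_self,
      ZMod.natCast_zmod_val]
    ring

theorem validPath_of_univ_subset {B : Set (ZMod k)} {s t : ZMod k} {p : List Move}
    (hp : p ≠ []) (ht : endAt s p = t) (hcov : Set.univ ⊆ coveredSet s p) : ValidPath B s t p :=
  ⟨hp, ht, (Set.subset_univ B).trans hcov⟩

theorem exists_validPath_length_eq [NeZero k] {x : ZMod k} (hx : x = 0 ∨ x = 1 ∨ x = -1)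
    (B : Set (ZMod k)) : ∃ p, ValidPath B 0 x p ∧ p.length = k := by
  have hlen (m m' : Move) : (List.replicate (k - 1) m ++ [m']).length = k := by
    simp only [List.length_append, List.length_replicate, List.length_singleton]
    have := NeZero.pos k
    omega
  rcases hx with rfl | rfl | rfl
  · refine ⟨_, validPath_of_univ_subset (by simp) ?_ (univ_subset_coveredSet_sweep_c (.inr rfl)),
      hlen _ _⟩
    simp [endAt_append, endAt_replicate_c, endAt, Move.step, natCast_pred_self]
  · refine ⟨_, validPath_of_univ_subset (by simp) ?_ (univ_subset_coveredSet_sweep_a (.inr rfl)),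
      hlen _ _⟩
    simp [endAt_append, endAt_replicate_a, endAt, Move.step, natCast_pred_self]
  · refine ⟨_, validPath_of_univ_subset (by simp) ?_ (univ_subset_coveredSet_sweep_c (.inl rfl)),
      hlen _ _⟩
    simp [endAt_append, endAt_replicate_c, endAt, Move.step, natCast_pred_self]

end

/-- for k ∈ {2,3}, the maximum over all pairs (B, x) ≠ (∅, 0) of the
minimum length of a valid path from 0 to x covering B equals k. -/
theorem diameter_small_k (k : ℕ) (hk : k = 2 ∨ k = 3) :
    IsGreatest
      {L : ℕ | ∃ (B : Set (ZMod k)) (x : ZMod k), ¬(B = ∅ ∧ x = 0) ∧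
        L = sInf {m : ℕ | ∃ p : List Move, ValidPath B 0 x p ∧ p.length = m}}
      k := by
  have : NeZero k := ⟨by omega⟩
  have hx : ∀ x : ZMod k, x = 0 ∨ x = 1 ∨ x = -1 := by rcases hk with rfl | rfl <;> decide
  refine ⟨⟨Set.univ, 0, by simp, le_antisymm ?_ ?_⟩, ?_⟩
  · refine le_csInf ⟨k, exists_validPath_length_eq (hx 0) _⟩ ?_
    rintro m ⟨p, ⟨-, -, hcov⟩, rfl⟩
    exact le_length_of_univ_subset_coveredSet hcov
  · exact Nat.sInf_le (exists_validPath_length_eq (hx 0) _)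
  · rintro L ⟨B, x, -, rfl⟩
    exact Nat.sInf_le (exists_validPath_length_eq (hx x) B)
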